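/- Let n ≥ 1. The uniform average over A ∈ ℬₙ of the rank-one projector onto the real equatorial stabilizer state equals the maximally mixed state: (1/|ℬₙ|) Σ_{A ∈ ℬₙ} φ^{req}_A (φ^{req}_A)† = (1/2ⁿ)·I, where I is the 2ⁿ×2ⁿ identity matrix and |ℬₙ| = 2^{(n²+n)/2}. -/

import Mathlib

open Finset Matrix

/-- Bit strings of length `n`, with entries viewed as `0/1` integers via `Fin 2`. -/
abbrev Bits (n : ℕ) := Fin n → Fin 2

/-- The index set `ℬₙ`: upper-triangular `n × n` matrices with entries in `{0,1}`
(`a_{ij} = 0` for `i > j`). -/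
noncomputable def Bn (n : ℕ) : Finset (Matrix (Fin n) (Fin n) (Fin 2)) :=
  open Classical in Finset.univ.filter fun A => ∀ i j : Fin n, j < i → A i j = 0

/-- The quadratic form `xᵀ A x = Σ_{i,j} a_{ij} x_i x_j` (only `i ≤ j` terms contribute),
computed as a natural number; only its parity matters below. -/
def quadB {n : ℕ} (A : Matrix (Fin n) (Fin n) (Fin 2)) (x : Bits n) : ℕ :=
  ∑ i, ∑ j, (A i j : ℕ) * (x i : ℕ) * (x j : ℕ)

/-- The real equatorial stabilizer state `φ^{req}_A`, with components
`φ^{req}_A(x) = 2^{-n/2} (−1)^{xᵀAx}`. -/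
noncomputable def phiReq {n : ℕ} (A : Matrix (Fin n) (Fin n) (Fin 2)) (x : Bits n) : ℂ :=
  (-1 : ℂ) ^ quadB A x / (Real.sqrt (2 ^ n) : ℂ)

/-- The rank-one projector `φ φ†` onto a vector `φ`. -/
noncomputable def outer {ι : Type*} (φ : ι → ℂ) : Matrix ι ι ℂ :=
  Matrix.of fun x y => φ x * (starRingEnd ℂ) (φ y)

/-!
Entry `(x, y)` of the average is `2⁻ⁿ` times the mean over `A ∈ ℬₙ` of `(-1)^(xᵀAx + yᵀAy)`.
On the diagonal the exponent is even. Off the diagonal pick `i` with `xᵢ ≠ yᵢ`: adding the unit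
matrix `Eᵢᵢ` is a fixed-point-free involution of `ℬₙ` that multiplies the sign by
`(-1)^(xᵢ² + yᵢ²) = (-1)^(xᵢ + yᵢ) = -1`, so the terms cancel in pairs.
-/

section Signs

variable {R : Type*} [CommRing R] {n : ℕ}

lemma neg_one_pow_val_add (a b : Fin 2) :
    (-1 : R) ^ ((a + b : Fin 2) : ℕ) = (-1) ^ (a : ℕ) * (-1) ^ (b : ℕ) := by
  rw [Fin.val_add, ← neg_one_pow_eq_pow_mod_two, pow_add]

lemma neg_one_pow_val_mul_neg_one_pow_val_of_ne {a b : Fin 2} (h : a ≠ b) :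
    (-1 : R) ^ (a : ℕ) * (-1) ^ (b : ℕ) = -1 := by
  fin_cases a <;> fin_cases b <;> simp_all

lemma neg_one_pow_quadB_add (A B : Matrix (Fin n) (Fin n) (Fin 2)) (x : Bits n) :
    (-1 : R) ^ quadB (A + B) x = (-1) ^ quadB A x * (-1) ^ quadB B x := by
  simp only [quadB, ← prod_pow_eq_pow_sum, ← prod_mul_distrib, mul_assoc, pow_mul,
    Matrix.add_apply, neg_one_pow_val_add, mul_pow]

lemma quadB_single_self (i : Fin n) (x : Bits n) : quadB (single i i 1) x = x i * x i := by
  simp [quadB, single_apply, ite_and, apply_ite, ite_mul]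

lemma neg_one_pow_quadB_single_self (i : Fin n) (x : Bits n) :
    (-1 : R) ^ quadB (single i i 1) x = (-1) ^ (x i : ℕ) := by
  rw [quadB_single_self]
  generalize x i = b
  fin_cases b <;> simp

end Signs

lemma zero_mem_Bn (n : ℕ) : 0 ∈ Bn n := by
  simp [Bn]

lemma add_single_self_mem_Bn {n : ℕ} {A : Matrix (Fin n) (Fin n) (Fin 2)} (hA : A ∈ Bn n)
    (i : Fin n) : A + single i i 1 ∈ Bn n := by
  simp only [Bn, mem_filter, mem_univ, true_and] at hA ⊢
  intro p q hqp
  simp only [Matrix.add_apply, hA p q hqp, single_apply, zero_add, ite_eq_right_iff]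
  rintro ⟨rfl, rfl⟩
  exact absurd hqp (lt_irrefl _)

lemma add_single_self_add_single_self {n : ℕ} (A : Matrix (Fin n) (Fin n) (Fin 2)) (i : Fin n) :
    A + single i i 1 + single i i 1 = A := by
  ext p q
  simp only [Matrix.add_apply, single_apply]
  split_ifs <;> simp [add_assoc]

lemma sum_Bn_neg_one_pow_quadB_add_eq_zero {R : Type*} [CommRing R] {n : ℕ} {x y : Bits n}
    (hxy : x ≠ y) : ∑ A ∈ Bn n, (-1 : R) ^ (quadB A x + quadB A y) = 0 := by
  obtain ⟨i, hi⟩ := Function.ne_iff.mp hxy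
  refine sum_involution (fun A _ => A + single i i 1) (fun A _ => ?_) (fun A _ _ => ?_)
    (fun A hA => add_single_self_mem_Bn hA i) (fun A _ => add_single_self_add_single_self A i)
  · have hflip : (-1 : R) ^ quadB (single i i 1) x * (-1) ^ quadB (single i i 1) y = -1 := by
      rw [neg_one_pow_quadB_single_self, neg_one_pow_quadB_single_self,
        neg_one_pow_val_mul_neg_one_pow_val_of_ne hi]
    simp only [pow_add, neg_one_pow_quadB_add]
    linear_combination ((-1 : R) ^ quadB A x * (-1) ^ quadB A y) * hflip
  · rw [Ne, add_eq_left]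
    intro h
    simpa using congr_fun₂ h i i

lemma outer_phiReq_apply {n : ℕ} (A : Matrix (Fin n) (Fin n) (Fin 2)) (x y : Bits n) :
    outer (phiReq A) x y = (-1 : ℂ) ^ (quadB A x + quadB A y) / 2 ^ n := by
  simp only [outer, phiReq, of_apply, map_div₀, map_pow, map_neg, map_one, Complex.conj_ofReal,
    div_mul_div_comm, ← pow_add, ← Complex.ofReal_mul,
    Real.mul_self_sqrt (by positivity : (0 : ℝ) ≤ 2 ^ n)]
  push_cast
  ring

theorem respovm_first_moment_general (n : ℕ) :
    (((Bn n).card : ℂ))⁻¹ • ∑ A ∈ Bn n, outer (phiReq A) =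
      ((2 : ℂ) ^ n)⁻¹ • (1 : Matrix (Bits n) (Bits n) ℂ) := by
  have hcard : ((Bn n).card : ℂ) ≠ 0 := by exact_mod_cast card_ne_zero_of_mem (zero_mem_Bn n)
  ext x y
  simp only [Matrix.smul_apply, Matrix.sum_apply, smul_eq_mul, one_apply, outer_phiReq_apply,
    ← sum_div]
  split_ifs with hxy
  · subst hxy
    simp only [← two_mul, pow_mul, neg_one_sq, one_pow, sum_const, nsmul_eq_mul, mul_one]
    field_simp
  · rw [sum_Bn_neg_one_pow_quadB_add_eq_zero hxy, zero_div, mul_zero, mul_zero]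

/-- the uniform average over `A ∈ ℬₙ` of the rank-one projector onto
`φ^{req}_A` is the maximally mixed state `(1/2ⁿ)·I`. -/
theorem respovm_first_moment (n : ℕ) (hn : 1 ≤ n) :
    (((Bn n).card : ℂ))⁻¹ • ∑ A ∈ Bn n, outer (phiReq A) =
      ((2 : ℂ) ^ n)⁻¹ • (1 : Matrix (Bits n) (Bits n) ℂ) :=
  respovm_first_moment_general n
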